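/- The hypergeometric series J^{(i)} for ℂP^N is obtained from (1−q)Γ_q(Q) by Gamma-operators: for each i, ∏_{j≠i} [Γ_{q^{-1}}(Λ_iΛ_j^{-1} q^{Q∂_Q}) / Γ_{q^{-1}}(Λ_iΛ_j^{-1})] applied to (1−q)∑_{d≥0} Q^d/∏_{r=1}^{d}(1−q^r) equals (1−q)∑_{d≥0} Q^d / [∏_{r=1}^{d}(1−q^r) · ∏_{j≠i}∏_{r=1}^{d}(1−q^rΛ_i/Λ_j)]. -/

import Mathlib

section QShift

variable {F : Type*} [Field F] {q a : F} {f : ℤ → F}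

theorem eq_mul_prod_range_of_qshift (hf : ∀ m : ℤ, f (m - 1) = f m * (1 - a * q ^ m)) (d : ℕ) :
    f 0 = f d * ∏ r ∈ Finset.range d, (1 - q ^ (r + 1) * a) := by
  induction d with
  | zero => simp
  | succ n ih =>
    have step : f n = f (n + 1 : ℕ) * (1 - q ^ (n + 1) * a) := by
      have h := hf (n + 1 : ℕ)
      rwa [zpow_natCast, Nat.cast_succ, add_sub_cancel_right, mul_comm a] at h
    rw [Finset.prod_range_succ, ← mul_assoc, ih, step]
    ring

theorem div_eq_inv_prod_range_of_qshift (hf : ∀ m : ℤ, f (m - 1) = f m * (1 - a * q ^ m))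
    (hf0 : f 0 ≠ 0) (d : ℕ) :
    f d / f 0 = (∏ r ∈ Finset.range d, (1 - q ^ (r + 1) * a))⁻¹ := by
  have h := eq_mul_prod_range_of_qshift hf d
  have hfd : f d ≠ 0 := fun h' => hf0 (by rw [h, h', zero_mul])
  rw [h, div_mul_cancel_left₀ hfd]

end QShift

/-- `Γ j m` stands for `Γ_{q^{-1}}((Λ_i/Λ_j) q^m)`, so the Gamma-operator
`Γ_{q^{-1}}(Λ_iΛ_j^{-1} q^{Q∂_Q}) / Γ_{q^{-1}}(Λ_iΛ_j^{-1})` multiplies the `Q^d`-coefficient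
by `Γ j d / Γ j 0`. -/
theorem hypergeometric_from_Gamma_operators_general (F : Type*) [Field F] (N : ℕ)
    (q : F) (Λ : Fin (N + 1) → F)
    (i : Fin (N + 1))
    (Γ : Fin (N + 1) → ℤ → F)
    (hfe : ∀ j, j ≠ i → ∀ m : ℤ, Γ j (m - 1) = Γ j m * (1 - (Λ i / Λ j) * q ^ m))
    (hΓ0 : ∀ j, Γ j 0 ≠ 0) :
    PowerSeries.mk (fun d =>
        (∏ j ∈ Finset.univ.erase i, (Γ j (d : ℤ) / Γ j 0)) *
          ((1 - q) / ∏ r ∈ Finset.range d, (1 - q ^ (r + 1))))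
      = PowerSeries.mk (fun d =>
          (1 - q) / ((∏ r ∈ Finset.range d, (1 - q ^ (r + 1))) *
            ∏ j ∈ Finset.univ.erase i, ∏ r ∈ Finset.range d,
              (1 - q ^ (r + 1) * (Λ i / Λ j)))) := by
  ext d
  simp only [PowerSeries.coeff_mk]
  rw [Finset.prod_congr rfl fun j hj =>
      div_eq_inv_prod_range_of_qshift (hfe j (Finset.ne_of_mem_erase hj)) (hΓ0 j) d,
    Finset.prod_inv_distrib, inv_mul_eq_div, div_div]

/-- The hypergeometric series `J^{(i)}` for `ℂP^N` is obtained from `(1−q)Γ_q(Q)` by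
Gamma-operators. The operator `∏_{j≠i} Γ_{q^{-1}}(Λ_iΛ_j^{-1} q^{Q∂_Q})/Γ_{q^{-1}}(Λ_iΛ_j^{-1})`
acts diagonally, multiplying the `Q^d`-coefficient by `∏_{j≠i} Γ_j(d)/Γ_j(0)` where
`Γ_j(m) := Γ_{q^{-1}}((Λ_i/Λ_j) q^m)` satisfies the functional equation
`Γ_j(m−1) = Γ_j(m)(1 − (Λ_i/Λ_j)q^m)`. The resulting series equals
`(1−q)∑_d Q^d/[∏_{r=1}^d(1−q^r)·∏_{j≠i}∏_{r=1}^d(1−q^rΛ_i/Λ_j)]`. -/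
theorem hypergeometric_from_Gamma_operators (F : Type*) [Field F] (N : ℕ)
    (q : F) (hq0 : q ≠ 0) (Λ : Fin (N + 1) → F) (hΛ : ∀ j, Λ j ≠ 0)
    (hq : ∀ r : ℕ, 1 ≤ r → 1 - q ^ r ≠ 0)
    (i : Fin (N + 1))
    (hqΛ : ∀ j, j ≠ i → ∀ r : ℕ, 1 ≤ r → 1 - q ^ r * (Λ i / Λ j) ≠ 0)
    (Γ : Fin (N + 1) → ℤ → F)
    (hfe : ∀ j, j ≠ i → ∀ m : ℤ, Γ j (m - 1) = Γ j m * (1 - (Λ i / Λ j) * q ^ m))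
    (hΓ0 : ∀ j, Γ j 0 ≠ 0) :
    PowerSeries.mk (fun d =>
        (∏ j ∈ Finset.univ.erase i, (Γ j (d : ℤ) / Γ j 0)) *
          ((1 - q) / ∏ r ∈ Finset.range d, (1 - q ^ (r + 1))))
      = PowerSeries.mk (fun d =>
          (1 - q) / ((∏ r ∈ Finset.range d, (1 - q ^ (r + 1))) *
            ∏ j ∈ Finset.univ.erase i, ∏ r ∈ Finset.range d,
              (1 - q ^ (r + 1) * (Λ i / Λ j)))) :=
  hypergeometric_from_Gamma_operators_general F N q Λ i Γ hfe hΓ0
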